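/- Let f* : [−π, π] → ℝ be defined by f*(t) = π²/4 − t² for t ∈ [−π/2, π/2] and f*(t) = 0 for t ∈ [−π, −π/2) ∪ (π/2, π], and let its Fourier coefficients be f̂*(k) = (1/(2π)) ∫_{−π}^{π} f*(t) exp(−ikt) dt for k ∈ ℤ. Then f̂*(0) = π²/12, and for every integer k ≥ 1 one has |f̂*(k)| ≥ 2/(π k³). -/

import Mathlib

/-!
`f*` vanishes outside `[-π/2, π/2]`, so `f̂*(k)` is `1/(2π)` times the integral of
`(a² - t²) e^{-ikt}` over `[-a, a]` with `a = π/2`. This integral has the elementary antiderivative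
`e^{ct} ((a² - t²) c² + 2tc - 2) / c³` (`c = -ik`), which gives, for `k ≠ 0`,
`f̂*(k) = (2 sin(kπ/2) - πk cos(kπ/2)) / (πk³)`. For even `k` the sine vanishes and the numerator
has absolute value `π|k| > 2`; for odd `k` the cosine vanishes and it has absolute value `2`.
-/

open MeasureTheory

/-- The function `f*(t) = π²/4 - t²` on `[-π/2, π/2]`, extended by `0`. -/
noncomputable def fstar (t : ℝ) : ℝ :=
  if |t| ≤ Real.pi / 2 then Real.pi ^ 2 / 4 - t ^ 2 else 0

/-- The `k`-th Fourier coefficient `f̂*(k) = (1/(2π)) ∫_{-π}^{π} f*(t) exp(-ikt) dt`. -/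
noncomputable def fstarFourierCoeff (k : ℤ) : ℂ :=
  (1 / (2 * (Real.pi : ℂ))) *
    ∫ t in (-Real.pi)..Real.pi, (fstar t : ℂ) * Complex.exp (-Complex.I * (k : ℂ) * (t : ℂ))

open Real
open Complex (I ofReal_cos ofReal_sin exp_mul_I I_sq)
open scoped Complex

theorem intervalIntegral.integral_indicator_Icc {E : Type*} [NormedAddCommGroup E] [NormedSpace ℝ E]
    {f : ℝ → E} {a b c d : ℝ} (hac : a ≤ c) (hcd : c ≤ d) (hdb : d ≤ b) :
    ∫ t in a..b, (Set.Icc c d).indicator f t = ∫ t in c..d, f t := by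
  rw [intervalIntegral.integral_of_le (hac.trans (hcd.trans hdb)), ← integral_Icc_eq_integral_Ioc,
    setIntegral_indicator measurableSet_Icc,
    Set.inter_eq_self_of_subset_right (Set.Icc_subset_Icc hac hdb), integral_Icc_eq_integral_Ioc,
    ← intervalIntegral.integral_of_le hcd]

theorem integral_fstar_mul (g : ℝ → ℂ) :
    ∫ t in -π..π, (fstar t : ℂ) * g t = ∫ t in -(π / 2)..π / 2, ((π / 2 : ℂ) ^ 2 - t ^ 2) * g t := by
  have hπ := pi_pos
  rw [← intervalIntegral.integral_indicator_Icc (a := -π) (b := π)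
    (f := fun t => ((π / 2 : ℂ) ^ 2 - t ^ 2) * g t) (by linarith) (by linarith) (by linarith)]
  refine intervalIntegral.integral_congr fun t _ => ?_
  by_cases ht : |t| ≤ π / 2
  · rw [Set.indicator_of_mem (show t ∈ Set.Icc (-(π / 2)) (π / 2) from abs_le.mp ht), fstar,
      if_pos ht]
    push_cast
    ring
  · rw [Set.indicator_of_notMem
      (show t ∉ Set.Icc (-(π / 2)) (π / 2) from fun h => ht (abs_le.mpr h)), fstar, if_neg ht]
    simp

theorem hasDerivAt_parabola_mul_cexp_antideriv (a : ℝ) (c : ℂ) (t : ℝ) :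
    HasDerivAt (fun t : ℝ => cexp (c * t) * (((a : ℂ) ^ 2 - t ^ 2) * c ^ 2 + 2 * t * c - 2))
      (c ^ 3 * (((a : ℂ) ^ 2 - t ^ 2) * cexp (c * t))) t := by
  have hid : HasDerivAt (fun t : ℝ => (t : ℂ)) 1 t := (hasDerivAt_id t).ofReal_comp
  have hexp := (hid.const_mul c).cexp
  have hpoly := ((((hid.fun_pow 2).const_sub ((a : ℂ) ^ 2)).mul_const (c ^ 2)).fun_add
    ((hid.const_mul 2).mul_const c)).sub_const 2
  refine (hexp.fun_mul hpoly).congr_deriv ?_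
  push_cast
  ring

theorem integral_parabola_mul_cexp (a : ℝ) (c : ℂ) :
    c ^ 3 * ∫ t in -a..a, ((a : ℂ) ^ 2 - t ^ 2) * cexp (c * t) =
      cexp (c * a) * (2 * a * c - 2) + cexp (-(c * a)) * (2 * a * c + 2) := by
  rw [← intervalIntegral.integral_const_mul, intervalIntegral.integral_eq_sub_of_hasDerivAt
    (fun t _ => hasDerivAt_parabola_mul_cexp_antideriv a c t)
    (Continuous.intervalIntegrable (by fun_prop) _ _)]
  push_cast
  rw [mul_neg c]
  ring

theorem integral_parabola_mul_cexp_neg_I_mul (a k : ℝ) (hk : k ≠ 0) :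
    ∫ t in -a..a, ((a : ℂ) ^ 2 - t ^ 2) * cexp (-I * k * t) =
      ((4 * (sin (k * a) - k * a * cos (k * a)) / k ^ 3 : ℝ) : ℂ) := by
  have h := integral_parabola_mul_cexp a (-I * k)
  have hplus : cexp (-(-I * k * a)) = cos (k * a) + sin (k * a) * I := by
    rw [show -(-I * k * a) = ((k * a : ℝ) : ℂ) * I by push_cast; ring, exp_mul_I, ofReal_cos,
      ofReal_sin]
  have hminus : cexp (-I * k * a) = cos (k * a) - sin (k * a) * I := by
    rw [show -I * k * a = ((-(k * a) : ℝ) : ℂ) * I by push_cast; ring, exp_mul_I, ← ofReal_cos,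
      ← ofReal_sin, Real.cos_neg, Real.sin_neg]
    push_cast
    ring
  rw [hplus, hminus] at h
  have hk3 : (-I * k) ^ 3 ≠ 0 := by simp [hk]
  rw [← mul_right_inj' hk3, h]
  have hk' : (k : ℂ) ≠ 0 := by exact_mod_cast hk
  push_cast
  field_simp
  linear_combination 4 * I * (Complex.sin (k * a) - k * a * Complex.cos (k * a)) * I_sq

theorem integral_sq_sub_sq (a : ℝ) : ∫ t in -a..a, (a ^ 2 - t ^ 2) = 4 * a ^ 3 / 3 := by
  rw [intervalIntegral.integral_sub intervalIntegrable_const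
    (Continuous.intervalIntegrable (by fun_prop) _ _), integral_pow]
  simp only [intervalIntegral.integral_const, sub_neg_eq_add, smul_eq_mul, Nat.cast_ofNat]
  ring

theorem fstarFourierCoeff_zero : fstarFourierCoeff 0 = ((π ^ 2 / 12 : ℝ) : ℂ) := by
  rw [fstarFourierCoeff, integral_fstar_mul]
  have h := congrArg ((↑) : ℝ → ℂ) (integral_sq_sub_sq (π / 2))
  rw [← intervalIntegral.integral_ofReal] at h
  push_cast at h ⊢
  simp only [mul_zero, zero_mul, Complex.exp_zero, mul_one, h]
  field_simp
  ring

theorem fstarFourierCoeff_of_ne_zero {k : ℤ} (hk : k ≠ 0) :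
    fstarFourierCoeff k = ((2 * sin (k * π / 2) - π * k * cos (k * π / 2)) / (π * k ^ 3) : ℝ) := by
  have hk' : (k : ℝ) ≠ 0 := by exact_mod_cast hk
  rw [fstarFourierCoeff, integral_fstar_mul]
  have h := integral_parabola_mul_cexp_neg_I_mul (π / 2) k hk'
  push_cast at h ⊢
  rw [h]
  field_simp
  ring

theorem two_le_abs_two_mul_sin_sub_pi_mul_cos {k : ℤ} (hk : k ≠ 0) :
    2 ≤ |2 * sin (k * π / 2) - π * k * cos (k * π / 2)| := by
  rcases Int.even_or_odd' k with ⟨m, rfl | rfl⟩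
  · have hk1 : (1 : ℝ) ≤ |((2 * m : ℤ) : ℝ)| := by exact_mod_cast Int.one_le_abs hk
    have harg : ((2 * m : ℤ) : ℝ) * π / 2 = m * π := by push_cast; ring
    rw [harg, sin_int_mul_pi, mul_zero, zero_sub, abs_neg, abs_mul, abs_cos_int_mul_pi, mul_one,
      abs_mul, abs_of_pos pi_pos]
    nlinarith [pi_gt_three]
  · have harg : ((2 * m + 1 : ℤ) : ℝ) * π / 2 = m * π + π / 2 := by push_cast; ring
    rw [harg, cos_add_pi_div_two, sin_add_pi_div_two, sin_int_mul_pi]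
    simp [abs_mul, abs_cos_int_mul_pi]

/-- The Fourier coefficients of `f*` satisfy `f̂*(0) = π²/12` and
`|f̂*(k)| ≥ 2/(π k³)` for every integer `k ≥ 1`. -/
theorem fstar_fourier_coefficient_lower_bound :
    fstarFourierCoeff 0 = ((Real.pi ^ 2 / 12 : ℝ) : ℂ) ∧
    ∀ k : ℤ, 1 ≤ k → 2 / (Real.pi * (k : ℝ) ^ 3) ≤ ‖fstarFourierCoeff k‖ := by
  refine ⟨fstarFourierCoeff_zero, fun k hk => ?_⟩
  have hk0 : k ≠ 0 := by omega
  have hD : 0 < π * (k : ℝ) ^ 3 := by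
    have : (0 : ℝ) < k := by exact_mod_cast hk
    positivity
  rw [fstarFourierCoeff_of_ne_zero hk0, Complex.norm_real, Real.norm_eq_abs, abs_div, abs_of_pos hD]
  exact div_le_div_of_nonneg_right (two_le_abs_two_mul_sin_sub_pi_mul_cos hk0) hD.le
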